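/- Define F_β(y) = (y/β)·arctan(αβy) − (1/(2αβ²))·log(1 + α²β²y²) for α > 0, 0 < β < 1, y ∈ ℝ. Then F_β is nonnegative, F_β(0) = 0, its derivative in y equals β^{−1} arctan(αβy) (so F_β is decreasing on (−∞,0] and increasing on [0,∞)), and moreover exp(−F_β(y)) ≤ exp(−|y|/3) whenever |y| ≥ 1/α. -/

import Mathlib

open Real Set

/-- `F_β(y) = (y/β)·arctan(αβy) − (1/(2αβ²))·log(1 + α²β²y²)`. -/
noncomputable def Fbeta (α β y : ℝ) : ℝ :=
  y / β * Real.arctan (α * β * y) -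
    1 / (2 * α * β ^ 2) * Real.log (1 + α ^ 2 * β ^ 2 * y ^ 2)

/-!
Let `G t = t arctan t - log (1 + t²) / 2` (`arctanPrimitive`), the antiderivative of `arctan`
vanishing at `0`, so that `F_β y = G (αβy) / (αβ²)`. All properties but the last follow from
`G' = arctan`. For the tail bound, comparing derivatives gives `arctan t ≥ 2t/3` and hence
`G t ≥ t²/3` on `[0, 1]`, and then `G t ≥ βt/3` for `t ≥ β`; at `t = αβ|y| ≥ β` this is
`F_β y ≥ |y|/3`.
-/

theorem sub_le_sub_of_hasDerivAt_le {f g f' g' : ℝ → ℝ} {a b : ℝ} (hab : a ≤ b)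
    (hf : ∀ x, HasDerivAt f (f' x) x) (hg : ∀ x, HasDerivAt g (g' x) x)
    (h : ∀ x ∈ Ioo a b, g' x ≤ f' x) : g b - g a ≤ f b - f a := by
  have hmono : MonotoneOn (f - g) (Icc a b) :=
    monotoneOn_of_hasDerivWithinAt_nonneg (f' := f' - g') (convex_Icc a b)
      (fun x _ => ((hf x).sub (hg x)).continuousAt.continuousWithinAt)
      (fun x _ => ((hf x).sub (hg x)).hasDerivWithinAt)
      (fun x hx => by rw [interior_Icc] at hx; simpa using h x hx)
  have := hmono (left_mem_Icc.2 hab) (right_mem_Icc.2 hab) hab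
  simp only [Pi.sub_apply] at this
  linarith

theorem sub_pow_three_div_three_le_arctan {t : ℝ} (ht : 0 ≤ t) : t - t ^ 3 / 3 ≤ arctan t := by
  have hcmp := sub_le_sub_of_hasDerivAt_le ht (f' := fun x => 1 / (1 + x ^ 2))
    (g' := fun x => 1 - x ^ 2) hasDerivAt_arctan
    (fun x => by simpa using (hasDerivAt_id x).sub ((hasDerivAt_pow 3 x).div_const 3))
    (fun x _ => by
      rw [le_div_iff₀ (by positivity)]
      nlinarith [pow_two_nonneg (x ^ 2)])
  simpa using hcmp

theorem two_mul_div_three_le_arctan {t : ℝ} (ht : 0 ≤ t) (ht1 : t ≤ 1) :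
    2 * t / 3 ≤ arctan t := by
  have : t ^ 3 ≤ t := pow_le_of_le_one ht ht1 (by norm_num)
  linarith [sub_pow_three_div_three_le_arctan ht]

noncomputable def arctanPrimitive (t : ℝ) : ℝ := t * arctan t - log (1 + t ^ 2) / 2

theorem hasDerivAt_arctanPrimitive (t : ℝ) : HasDerivAt arctanPrimitive (arctan t) t := by
  have hpos : 0 < 1 + t ^ 2 := by positivity
  have hlog : HasDerivAt (fun t : ℝ => log (1 + t ^ 2)) (2 * t / (1 + t ^ 2)) t := by
    simpa using ((hasDerivAt_pow 2 t).const_add 1).log hpos.ne'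
  refine (((hasDerivAt_id' t).mul (hasDerivAt_arctan t)).sub (hlog.div_const 2)).congr_deriv ?_
  field_simp
  ring

@[simp]
theorem arctanPrimitive_zero : arctanPrimitive 0 = 0 := by simp [arctanPrimitive]

@[simp]
theorem arctanPrimitive_neg (t : ℝ) : arctanPrimitive (-t) = arctanPrimitive t := by
  simp [arctanPrimitive]

theorem monotoneOn_arctanPrimitive : MonotoneOn arctanPrimitive (Ici 0) :=
  monotoneOn_of_hasDerivWithinAt_nonneg (convex_Ici 0)
    (fun x _ => (hasDerivAt_arctanPrimitive x).continuousAt.continuousWithinAt)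
    (fun x _ => (hasDerivAt_arctanPrimitive x).hasDerivWithinAt)
    (fun _ hx => arctan_nonneg.2 (interior_subset hx))

theorem arctanPrimitive_nonneg (t : ℝ) : 0 ≤ arctanPrimitive t := by
  have h := monotoneOn_arctanPrimitive self_mem_Ici (abs_nonneg t) (abs_nonneg t)
  rcases abs_choice t with ht | ht <;> simpa [ht] using h

theorem sq_div_three_le_arctanPrimitive {t : ℝ} (ht : 0 ≤ t) (ht1 : t ≤ 1) :
    t ^ 2 / 3 ≤ arctanPrimitive t := by
  have hcmp := sub_le_sub_of_hasDerivAt_le ht hasDerivAt_arctanPrimitive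
    (fun x => by simpa using (hasDerivAt_pow 2 x).div_const 3)
    (fun x hx => by simpa [mul_div_assoc] using
      two_mul_div_three_le_arctan hx.1.le (hx.2.le.trans ht1))
  simpa using hcmp

theorem mul_div_three_le_arctanPrimitive {β t : ℝ} (hβ : 0 ≤ β) (hβ1 : β ≤ 1) (ht : β ≤ t) :
    β * t / 3 ≤ arctanPrimitive t := by
  have hcmp := sub_le_sub_of_hasDerivAt_le ht hasDerivAt_arctanPrimitive
    (fun x => by simpa using ((hasDerivAt_id x).const_mul β).div_const 3)
    (fun x hx => by
      linarith [two_mul_div_three_le_arctan hβ hβ1, arctan_le_arctan_iff.2 hx.1.le])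
  nlinarith [sq_div_three_le_arctanPrimitive hβ hβ1]

theorem Fbeta_eq_arctanPrimitive (α β y : ℝ) :
    Fbeta α β y = arctanPrimitive (α * β * y) / (α * β ^ 2) := by
  rcases eq_or_ne α 0 with rfl | hα
  · simp [Fbeta]
  rcases eq_or_ne β 0 with rfl | hβ
  · simp [Fbeta]
  simp only [Fbeta, arctanPrimitive]
  field_simp

theorem Fbeta_neg (α β y : ℝ) : Fbeta α β (-y) = Fbeta α β y := by
  simp [Fbeta_eq_arctanPrimitive]

theorem Fbeta_abs (α β y : ℝ) : Fbeta α β |y| = Fbeta α β y := by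
  rcases abs_choice y with hy | hy <;> simp [hy, Fbeta_neg]

theorem Fbeta_zero (α β : ℝ) : Fbeta α β 0 = 0 := by simp [Fbeta]

theorem Fbeta_nonneg {α : ℝ} (hα : 0 ≤ α) (β y : ℝ) : 0 ≤ Fbeta α β y := by
  rw [Fbeta_eq_arctanPrimitive]
  exact div_nonneg (arctanPrimitive_nonneg _) (by positivity)

theorem hasDerivAt_Fbeta (α β y : ℝ) :
    HasDerivAt (Fbeta α β) (β⁻¹ * arctan (α * β * y)) y := by
  have hF : Fbeta α β = fun y => arctanPrimitive (α * β * y) / (α * β ^ 2) :=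
    funext (Fbeta_eq_arctanPrimitive α β)
  have h := ((hasDerivAt_arctanPrimitive (α * β * y)).comp y
    ((hasDerivAt_id y).const_mul (α * β))).div_const (α * β ^ 2)
  rw [hF]
  refine h.congr_deriv ?_
  rcases eq_or_ne α 0 with rfl | hα
  · simp
  rcases eq_or_ne β 0 with rfl | hβ
  · simp
  field_simp

theorem monotoneOn_Fbeta {α β : ℝ} (hα : 0 ≤ α) (hβ : 0 ≤ β) :
    MonotoneOn (Fbeta α β) (Ici 0) :=
  monotoneOn_of_hasDerivWithinAt_nonneg (convex_Ici 0)
    (fun x _ => (hasDerivAt_Fbeta α β x).continuousAt.continuousWithinAt)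
    (fun x _ => (hasDerivAt_Fbeta α β x).hasDerivWithinAt)
    (fun _ hx => mul_nonneg (inv_nonneg.2 hβ)
      (arctan_nonneg.2 (mul_nonneg (mul_nonneg hα hβ) (interior_subset hx))))

theorem antitoneOn_Fbeta {α β : ℝ} (hα : 0 ≤ α) (hβ : 0 ≤ β) :
    AntitoneOn (Fbeta α β) (Iic 0) :=
  antitoneOn_of_hasDerivWithinAt_nonpos (convex_Iic 0)
    (fun x _ => (hasDerivAt_Fbeta α β x).continuousAt.continuousWithinAt)
    (fun x _ => (hasDerivAt_Fbeta α β x).hasDerivWithinAt)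
    (fun _ hx => mul_nonpos_of_nonneg_of_nonpos (inv_nonneg.2 hβ) <| arctan_le_zero.2 <|
      mul_nonpos_of_nonneg_of_nonpos (mul_nonneg hα hβ) (interior_subset (s := Iic 0) hx))

theorem abs_div_three_le_Fbeta {α β y : ℝ} (hα : 0 < α) (hβ : 0 < β) (hβ1 : β ≤ 1)
    (hy : 1 / α ≤ |y|) : |y| / 3 ≤ Fbeta α β y := by
  have hαy : 1 ≤ α * |y| := by rwa [div_le_iff₀' hα] at hy
  have hβt : β ≤ α * β * |y| := by nlinarith
  have hG := mul_div_three_le_arctanPrimitive hβ.le hβ1 hβt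
  rw [← Fbeta_abs, Fbeta_eq_arctanPrimitive, le_div_iff₀ (by positivity)]
  calc |y| / 3 * (α * β ^ 2) = β * (α * β * |y|) / 3 := by ring
    _ ≤ arctanPrimitive (α * β * |y|) := hG

/-- Properties of `F_β`: nonnegativity, `F_β(0)=0`, the derivative formula
`F_β'(y) = β⁻¹ arctan(αβy)` (so `F_β` is decreasing on `(−∞,0]` and
increasing on `[0,∞)`), and the exponential tail bound
`exp(−F_β(y)) ≤ exp(−|y|/3)` for `|y| ≥ 1/α`. -/
theorem stmt12 (α β : ℝ) (hα : 0 < α) (hβ : 0 < β) (hβ1 : β < 1) :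
    (∀ y : ℝ, 0 ≤ Fbeta α β y) ∧
    Fbeta α β 0 = 0 ∧
    (∀ y : ℝ, HasDerivAt (Fbeta α β) (β⁻¹ * Real.arctan (α * β * y)) y) ∧
    AntitoneOn (Fbeta α β) (Set.Iic 0) ∧
    MonotoneOn (Fbeta α β) (Set.Ici 0) ∧
    (∀ y : ℝ, 1 / α ≤ |y| → Real.exp (-Fbeta α β y) ≤ Real.exp (-|y| / 3)) :=
  ⟨Fbeta_nonneg hα.le β, Fbeta_zero α β, hasDerivAt_Fbeta α β, antitoneOn_Fbeta hα.le hβ.le,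
    monotoneOn_Fbeta hα.le hβ.le, fun y hy => exp_le_exp.2 (by
      linarith [abs_div_three_le_Fbeta hα hβ hβ1.le hy])⟩
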